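/- Let a ≥ 2 be a natural number and d ∈ (0,1). Let (V, δ, 𝔰) be a deterministic partial automaton over Fin a such that: (i) every state reachable from 𝔰 has out-degree at least 1; and (ii) there exist K ∈ ℕ and a real λ > a^(−d) such that every word w accepted from 𝔰 with w.length ≥ K ends at a state of out-degree at least λ·a. For each L ∈ ℕ let μ_L be the law of a random set of relators at density d and length L (the product over Fin N_L, N_L = ⌈a^(d·L)⌉, of the uniform probability measure on Fin L → Fin a). Then the probability that at least one sampled relator is an accepted word of the automaton tends to 1 as L → ∞; formally, Tendsto (fun L => μ_L {ω | ∃ i, List.ofFn (ω i) is accepted from 𝔰}) atTop (nhds 1). -/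

import Mathlib

/-!
Past length `K` every accepted word extends by at least `m = ⌈λa⌉` letters, and since reachable
states have out-degree `≥ 1` some word of length `K` is accepted; so at least `m ^ (L - K)` words
of length `L` are accepted, and a uniform word is accepted with probability
`p_L ≥ m ^ (L - K) / a ^ L`.
Then `N_L p_L ≥ a^(dL) m^(L-K) / a^L` grows like `(a^d λ)^L → ∞`, because `λ > a^(-d)`,
and the probability that none of the `N_L` independent words is accepted is
`(1 - p_L)^(N_L) ≤ exp(-N_L p_L) → 0`.
-/

open MeasureTheory ENNReal

/-- The run map of a deterministic partial automaton. -/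
def reach {V α : Type*} (δ : V → α → Option V) : V → List α → Option V
  | v, [] => some v
  | v, x :: w => (δ v x).bind fun u => reach δ u w

/-- The out-degree of a state `v`: the number of letters on which a transition
from `v` is defined. -/
noncomputable def outDeg {V α : Type*} [Fintype α] (δ : V → α → Option V) (v : V) : ℕ :=
  open Classical in (Finset.univ.filter fun x : α => δ v x ≠ none).card

/-- The uniform probability measure on words of length `L` over `Fin a`
(words identified with functions `Fin L → Fin a`). -/
noncomputable def uniformWords (a L : ℕ) : Measure (Fin L → Fin a) :=
  ((Fintype.card (Fin L → Fin a) : ℝ≥0∞))⁻¹ • Measure.count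

/-- The law of a random set of relators at density `d` and length `L` over `Fin a`:
`N_L = ⌈a^(d·L)⌉` independent uniformly random words of length `L`. -/
noncomputable def relatorLaw (a : ℕ) (d : ℝ) (L : ℕ) :
    Measure (Fin ⌈(a : ℝ) ^ (d * (L : ℝ))⌉₊ → (Fin L → Fin a)) :=
  Measure.pi fun _ => uniformWords a L

open Filter Topology

section Automaton

variable {V α : Type*} (δ : V → α → Option V) (s : V)

theorem reach_append (v : V) (u w : List α) :
    reach δ v (u ++ w) = (reach δ v u).bind fun t => reach δ t w := by
  induction u generalizing v with
  | nil => rfl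
  | cons x u ih =>
    simp only [List.cons_append, reach]
    cases δ v x <;> simp [ih]

theorem reach_append_singleton (v : V) (u : List α) (x : α) :
    reach δ v (u ++ [x]) = (reach δ v u).bind fun t => δ t x := by
  simp [reach_append, reach]

theorem List.ofFn_snoc {n : ℕ} (w : Fin n → α) (x : α) :
    List.ofFn (Fin.snoc w x) = List.ofFn w ++ [x] := by
  rw [List.ofFn_succ']
  simp [Fin.snoc, List.concat_eq_append]

variable [Fintype α]

open Classical in
noncomputable def acceptedWords (n : ℕ) : Finset (Fin n → α) :=
  Finset.univ.filter fun w => reach δ s (List.ofFn w) ≠ none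

variable {δ s}

theorem mem_acceptedWords {n : ℕ} {w : Fin n → α} :
    w ∈ acceptedWords δ s n ↔ reach δ s (List.ofFn w) ≠ none := by
  simp [acceptedWords]

theorem snoc_mem_acceptedWords_iff {n : ℕ} {w : Fin n → α} {t : V}
    (hw : reach δ s (List.ofFn w) = some t) (x : α) :
    Fin.snoc w x ∈ acceptedWords δ s (n + 1) ↔ δ t x ≠ none := by
  rw [mem_acceptedWords, List.ofFn_snoc, reach_append_singleton, hw, Option.bind_some]

theorem init_mem_acceptedWords {n : ℕ} {v : Fin (n + 1) → α}
    (hv : v ∈ acceptedWords δ s (n + 1)) : Fin.init v ∈ acceptedWords δ s n := by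
  rw [← Fin.snoc_init_self v, mem_acceptedWords, List.ofFn_snoc, reach_append_singleton] at hv
  rw [mem_acceptedWords]
  intro hnone
  exact hv (by rw [hnone]; rfl)

open Classical in
theorem outDeg_le_card_extensions {n : ℕ} {w : Fin n → α} {t : V}
    (hw : reach δ s (List.ofFn w) = some t) :
    outDeg δ t ≤ ((acceptedWords δ s (n + 1)).filter fun v => Fin.init v = w).card := by
  refine Finset.card_le_card_of_injOn (fun x => (Fin.snoc w x : Fin (n + 1) → α))
    (fun x hx => ?_) ?_
  · simp only [Finset.coe_filter, Finset.mem_univ, true_and, Set.mem_ofPred_eq] at hx ⊢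
    exact ⟨(snoc_mem_acceptedWords_iff hw x).2 hx, Fin.init_snoc _ _⟩
  · intro x _ y _ hxy
    simpa using congrFun hxy (Fin.last n)

/-- Past length `K`, every accepted word has at least `m` accepted one-letter extensions. -/
theorem mul_card_acceptedWords_le {m K n : ℕ}
    (hdeg : ∀ (w : List α) (t : V), K ≤ w.length → reach δ s w = some t → m ≤ outDeg δ t)
    (hn : K ≤ n) :
    m * (acceptedWords δ s n).card ≤ (acceptedWords δ s (n + 1)).card := by
  classical
  rw [Finset.card_eq_sum_card_fiberwise fun v hv => init_mem_acceptedWords hv, mul_comm,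
    ← smul_eq_mul]
  refine Finset.card_nsmul_le_sum _ _ _ fun w hw => ?_
  obtain ⟨t, ht⟩ := Option.ne_none_iff_exists'.mp (mem_acceptedWords.mp hw)
  exact (hdeg _ t (by simpa using hn) ht).trans (outDeg_le_card_extensions ht)

theorem pow_mul_card_acceptedWords_le {m K n : ℕ}
    (hdeg : ∀ (w : List α) (t : V), K ≤ w.length → reach δ s w = some t → m ≤ outDeg δ t)
    (hn : K ≤ n) :
    m ^ (n - K) * (acceptedWords δ s K).card ≤ (acceptedWords δ s n).card := by
  induction n, hn using Nat.le_induction with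
  | base => simp
  | succ n hn ih =>
    rw [Nat.sub_add_comm hn, pow_succ, mul_comm _ m, mul_assoc]
    exact (Nat.mul_le_mul_left m ih).trans (mul_card_acceptedWords_le hdeg hn)

theorem one_le_card_acceptedWords
    (hdeg : ∀ (w : List α) (t : V), reach δ s w = some t → 1 ≤ outDeg δ t) (n : ℕ) :
    1 ≤ (acceptedWords δ s n).card := by
  have hempty : 0 < (acceptedWords δ s 0).card :=
    Finset.card_pos.mpr ⟨Fin.elim0, by simp [mem_acceptedWords, reach]⟩
  have hgrowth := pow_mul_card_acceptedWords_le (m := 1) (fun w t _ => hdeg w t) (Nat.zero_le n)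
  rw [one_pow, one_mul] at hgrowth
  exact hempty.trans_le hgrowth

theorem pow_le_card_acceptedWords {m K n : ℕ}
    (hreach : ∀ (w : List α) (t : V), reach δ s w = some t → 1 ≤ outDeg δ t)
    (hdeg : ∀ (w : List α) (t : V), K ≤ w.length → reach δ s w = some t → m ≤ outDeg δ t)
    (hn : K ≤ n) :
    m ^ (n - K) ≤ (acceptedWords δ s n).card :=
  (Nat.le_mul_of_pos_right _ (one_le_card_acceptedWords hreach K)).trans
    (pow_mul_card_acceptedWords_le hdeg hn)

end Automaton

theorem measure_pi_exists_mem {ι Ω : Type*} [Fintype ι] [MeasurableSpace Ω] (μ : Measure Ω)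
    [IsProbabilityMeasure μ] {A : Set Ω} (hA : MeasurableSet A) :
    Measure.pi (fun _ : ι => μ) {ω | ∃ i, ω i ∈ A} = 1 - (1 - μ A) ^ Fintype.card ι := by
  have hcompl : {ω : ι → Ω | ∃ i, ω i ∈ A} = (Set.univ.pi fun _ => Aᶜ)ᶜ := by ext; simp
  rw [hcompl, prob_compl_eq_one_sub (MeasurableSet.univ_pi fun _ => hA.compl), Measure.pi_pi,
    prob_compl_eq_one_sub hA, Finset.prod_const, Finset.card_univ]

theorem uniformWords_apply_finset (a L : ℕ) (S : Finset (Fin L → Fin a)) :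
    uniformWords a L S = S.card / (a : ℝ≥0∞) ^ L := by
  rw [uniformWords, Measure.smul_apply, Measure.count_apply_finset, smul_eq_mul, div_eq_mul_inv,
    mul_comm]
  simp

instance (a L : ℕ) [NeZero a] : IsProbabilityMeasure (uniformWords a L) := by
  constructor
  rw [← Finset.coe_univ, uniformWords_apply_finset, Finset.card_univ, Fintype.card_fun,
    Fintype.card_fin, Fintype.card_fin, Nat.cast_pow]
  exact ENNReal.div_self (pow_ne_zero _ (Nat.cast_ne_zero.mpr (NeZero.ne a))) (by simp)

theorem relatorLaw_exists_mem (a : ℕ) [NeZero a] (d : ℝ) (L : ℕ) (A : Set (Fin L → Fin a)) :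
    relatorLaw a d L {ω | ∃ i, ω i ∈ A} =
      1 - (1 - uniformWords a L A) ^ ⌈(a : ℝ) ^ (d * (L : ℝ))⌉₊ := by
  rw [relatorLaw, measure_pi_exists_mem _ A.toFinite.measurableSet, Fintype.card_fin]

theorem ENNReal.one_sub_le_ofReal_exp_neg (p : ℝ≥0∞) :
    1 - p ≤ ENNReal.ofReal (Real.exp (-p.toReal)) := by
  rcases eq_or_ne p ⊤ with rfl | hp
  · simp
  rw [← ENNReal.ofReal_toReal hp, ← ENNReal.ofReal_one, ← ENNReal.ofReal_sub _ toReal_nonneg,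
    ENNReal.toReal_ofReal toReal_nonneg]
  exact ENNReal.ofReal_le_ofReal (by linarith [Real.add_one_le_exp (-p.toReal)])

theorem tendsto_one_sub_one_sub_pow {ι : Type*} {l : Filter ι} (p : ι → ℝ≥0∞) (N : ι → ℕ)
    (h : Tendsto (fun i => N i * (p i).toReal) l atTop) :
    Tendsto (fun i => 1 - (1 - p i) ^ N i) l (𝓝 1) := by
  have hbound : ∀ i, (1 - p i) ^ N i ≤ ENNReal.ofReal (Real.exp (-(N i * (p i).toReal))) := by
    intro i
    calc (1 - p i) ^ N i ≤ ENNReal.ofReal (Real.exp (-(p i).toReal)) ^ N i :=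
          pow_le_pow_left' (ENNReal.one_sub_le_ofReal_exp_neg _) _
      _ = _ := by rw [← ENNReal.ofReal_pow (Real.exp_nonneg _), ← Real.exp_nat_mul]; ring_nf
  have hexp : Tendsto (fun i => ENNReal.ofReal (Real.exp (-(N i * (p i).toReal)))) l (𝓝 0) := by
    rw [← ENNReal.ofReal_zero]
    exact (ENNReal.continuous_ofReal.tendsto 0).comp
      (Real.tendsto_exp_neg_atTop_nhds_zero.comp h)
  have hfail : Tendsto (fun i => (1 - p i) ^ N i) l (𝓝 0) :=
    tendsto_of_tendsto_of_tendsto_of_le_of_le tendsto_const_nhds hexp (fun _ => bot_le) hbound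
  simpa [Function.comp_def] using ((ENNReal.continuous_sub_left one_ne_top).tendsto 0).comp hfail

/-- For `L ≥ K` the expression equals `(a ^ d * m / a) ^ L / m ^ K`. -/
theorem tendsto_rpow_mul_pow_sub_div_pow {a m d : ℝ} (K : ℕ) (ha : 0 < a) (hm : 0 < m)
    (h : a < a ^ d * m) :
    Tendsto (fun L : ℕ => a ^ (d * L) * (m ^ (L - K) / a ^ L)) atTop atTop := by
  have hratio : 1 < a ^ d * m / a := by rwa [one_lt_div ha]
  refine ((tendsto_pow_atTop_atTop_of_one_lt hratio).const_mul_atTop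
    (inv_pos.mpr (pow_pos hm K))).congr' ?_
  filter_upwards [eventually_ge_atTop K] with L hL
  rw [Real.rpow_mul_natCast ha.le, pow_sub₀ _ hm.ne' hL, div_pow, mul_pow]
  field_simp

theorem stmt11_general (a : ℕ) (ha : 2 ≤ a) (d : ℝ)
    {V : Type*} (δ : V → Fin a → Option V) (𝔰 : V)
    (hreach : ∀ (w : List (Fin a)) (t : V), reach δ 𝔰 w = some t → 1 ≤ outDeg δ t)
    (hlarge : ∃ K : ℕ, ∃ lam : ℝ, (a : ℝ) ^ (-d) < lam ∧
      ∀ (w : List (Fin a)) (t : V), K ≤ w.length → reach δ 𝔰 w = some t →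
        lam * a ≤ (outDeg δ t : ℝ)) :
    Filter.Tendsto
      (fun L : ℕ => relatorLaw a d L {ω | ∃ i, reach δ 𝔰 (List.ofFn (ω i)) ≠ none})
      Filter.atTop (nhds 1) := by
  obtain ⟨K, lam, hlam_gt, hlam⟩ := hlarge
  have : NeZero a := ⟨by omega⟩
  have ha0 : (0 : ℝ) < a := by positivity
  set m := ⌈lam * a⌉₊
  have hdeg : ∀ (w : List (Fin a)) (t : V), K ≤ w.length → reach δ 𝔰 w = some t →
      m ≤ outDeg δ t := fun w t hw ht => Nat.ceil_le.mpr (hlam w t hw ht)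
  have hgrowth : (a : ℝ) < a ^ d * m :=
    calc (a : ℝ) = a ^ d * a ^ (-d) * a := by
          rw [← Real.rpow_add ha0, add_neg_cancel, Real.rpow_zero, one_mul]
      _ < a ^ d * lam * a := by gcongr
      _ ≤ a ^ d * m := by rw [mul_assoc]; gcongr; exact Nat.le_ceil _
  have hm0 : (0 : ℝ) < m := pos_of_mul_pos_right (ha0.trans hgrowth) (Real.rpow_nonneg ha0.le d)
  have hset : ∀ L : ℕ, {ω : Fin ⌈(a : ℝ) ^ (d * (L : ℝ))⌉₊ → (Fin L → Fin a) |
      ∃ i, reach δ 𝔰 (List.ofFn (ω i)) ≠ none} =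
        {ω | ∃ i, ω i ∈ (acceptedWords δ 𝔰 L : Set _)} := by
    intro L; ext; simp [mem_acceptedWords]
  simp_rw [hset, relatorLaw_exists_mem]
  refine tendsto_one_sub_one_sub_pow _ _ (tendsto_atTop_mono' _ ?_
    (tendsto_rpow_mul_pow_sub_div_pow K ha0 hm0 hgrowth))
  filter_upwards [eventually_ge_atTop K] with L hL
  have hcard : (m : ℝ) ^ (L - K) ≤ (acceptedWords δ 𝔰 L).card :=
    mod_cast pow_le_card_acceptedWords hreach hdeg hL
  rw [uniformWords_apply_finset, ENNReal.toReal_div]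
  simp only [toReal_natCast, toReal_pow]
  gcongr
  exact Nat.le_ceil _

/-- for an automaton over `Fin a` (with `a ≥ 2`) in which every
reachable state has out-degree `≥ 1`, and which for some `K` and `λ > a^(−d)` has
all states reached by accepted words of length `≥ K` of out-degree `≥ λ·a`, the
probability that a random set of relators at density `d` and length `L` contains
an accepted word tends to `1` as `L → ∞`. -/
theorem stmt11 (a : ℕ) (ha : 2 ≤ a) (d : ℝ) (hd : d ∈ Set.Ioo (0 : ℝ) 1)
    {V : Type*} (δ : V → Fin a → Option V) (𝔰 : V)
    (hreach : ∀ (w : List (Fin a)) (t : V), reach δ 𝔰 w = some t → 1 ≤ outDeg δ t)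
    (hlarge : ∃ K : ℕ, ∃ lam : ℝ, (a : ℝ) ^ (-d) < lam ∧
      ∀ (w : List (Fin a)) (t : V), K ≤ w.length → reach δ 𝔰 w = some t →
        lam * a ≤ (outDeg δ t : ℝ)) :
    Filter.Tendsto
      (fun L : ℕ => relatorLaw a d L {ω | ∃ i, reach δ 𝔰 (List.ofFn (ω i)) ≠ none})
      Filter.atTop (nhds 1) :=
  stmt11_general a ha d δ 𝔰 hreach hlarge
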